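/- For a minimal time-like surface in ℝⁿ₁ in isothermal coordinates, the Gauss curvature satisfies K = -4‖Φ′⊥‖²/‖Φ‖⁴ = -4(‖Φ‖²‖Φ′‖² - |Φ̄·Φ′|²)/‖Φ‖⁶. -/

import Mathlib

noncomputable section

/-- The algebra of double numbers `D = {u + j v : j² = 1}`, modeled on `ℝ × ℝ`
(null-basis / idempotent coordinates), with the componentwise ring structure. -/
abbrev DNum : Type := ℝ × ℝ

namespace DNum

/-- The imaginary unit `j`, with `j * j = 1`. -/
def j : DNum := (-1, 1)

/-- The embedding of `ℝ` into the double numbers. -/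
def ofReal (u : ℝ) : DNum := (u, u)

/-- The double number `u + j v`. -/
def mk' (u v : ℝ) : DNum := ofReal u + j * ofReal v

/-- Conjugation `u + j v ↦ u - j v`. -/
def conj (t : DNum) : DNum := (t.2, t.1)

/-- The real part of a double number. -/
def re (t : DNum) : ℝ := (t.1 + t.2) / 2

/-- The imaginary part of a double number. -/
def im (t : DNum) : ℝ := (t.2 - t.1) / 2

/-- `q = (1 - j)/2`. -/
def q : DNum := (2⁻¹ : ℝ) • ((1 : DNum) - j)

/-- `q̄ = (1 + j)/2`. -/
def qbar : DNum := (2⁻¹ : ℝ) • ((1 : DNum) + j)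

/-- `|t|² = t·t̄ = u² - v²`. -/
def absSq (t : DNum) : ℝ := re (t * conj t)

/-- The set `D₊` of positive double numbers `a q + b q̄`, `a > 0`, `b > 0`. -/
def Dpos : Set DNum := {t | ∃ a b : ℝ, 0 < a ∧ 0 < b ∧ t = a • q + b • qbar}

/-- Directional (partial) derivative in direction `w`. -/
def pd {E : Type*} [NormedAddCommGroup E] [NormedSpace ℝ E]
    (w : ℝ × ℝ) (f : ℝ × ℝ → E) (p : ℝ × ℝ) : E := fderiv ℝ f p w

/-- Partial derivative `∂/∂u`. -/
def pu {E : Type*} [NormedAddCommGroup E] [NormedSpace ℝ E]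
    (f : ℝ × ℝ → E) : (ℝ × ℝ) → E := pd ((1 : ℝ), (0 : ℝ)) f

/-- Partial derivative `∂/∂v`. -/
def pv {E : Type*} [NormedAddCommGroup E] [NormedSpace ℝ E]
    (f : ℝ × ℝ → E) : (ℝ × ℝ) → E := pd ((0 : ℝ), (1 : ℝ)) f

/-- `∂f/∂t̄ = (1/2)(∂f/∂u - j ∂f/∂v)` for a `D`-valued function of `t = u + j v`. -/
def dbar (f : ℝ × ℝ → DNum) (p : ℝ × ℝ) : DNum := (2⁻¹ : ℝ) • (pu f p - j * pv f p)

/-- `∂f/∂t = (1/2)(∂f/∂u + j ∂f/∂v)` for a `D`-valued function of `t = u + j v`. -/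
def dt (f : ℝ × ℝ → DNum) (p : ℝ × ℝ) : DNum := (2⁻¹ : ℝ) • (pu f p + j * pv f p)

/-- The Minkowski signature `(-1, 1, …, 1)`. -/
def minkEta (m : ℕ) (i : Fin m) : ℝ := if (i : ℕ) = 0 then -1 else 1

variable {n : ℕ}

/-- The Minkowski scalar product on `ℝⁿ₁`. -/
def mink (a b : Fin n → ℝ) : ℝ := ∑ i, minkEta n i * (a i * b i)

/-- The `D`-bilinear extension of the Minkowski scalar product to `Dⁿ₁`. -/
def minkD (A B : Fin n → DNum) : DNum := ∑ i, ofReal (minkEta n i) * (A i * B i)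

/-- Componentwise conjugation on `Dⁿ₁`. -/
def conjV (A : Fin n → DNum) : Fin n → DNum := fun i => conj (A i)

/-- The (real) squared norm `‖A‖² = A·Ā` on `Dⁿ₁`. -/
def normSqV (A : Fin n → DNum) : ℝ := re (minkD A (conjV A))

/-- `∂/∂t̄` applied componentwise to a `Dⁿ₁`-valued function. -/
def dbarV (F : ℝ × ℝ → Fin n → DNum) (p : ℝ × ℝ) : Fin n → DNum :=
  fun i => dbar (fun z => F z i) p

/-- `∂/∂t` applied componentwise to a `Dⁿ₁`-valued function. -/
def dtV (F : ℝ × ℝ → Fin n → DNum) (p : ℝ × ℝ) : Fin n → DNum :=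
  fun i => dt (fun z => F z i) p

/-- Scalar multiplication of a `Dⁿ₁` vector by a double number. -/
def smulD (c : DNum) (A : Fin n → DNum) : Fin n → DNum := fun i => c * A i

/-- `x_u`. -/
def xu (x : ℝ × ℝ → Fin n → ℝ) : (ℝ × ℝ) → Fin n → ℝ := fun p => pu x p

/-- `x_v`. -/
def xv (x : ℝ × ℝ → Fin n → ℝ) : (ℝ × ℝ) → Fin n → ℝ := fun p => pv x p

/-- `Φ = x_u + j x_v`. -/
def Phi (x : ℝ × ℝ → Fin n → ℝ) : (ℝ × ℝ) → Fin n → DNum :=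
  fun p i => mk' (xu x p i) (xv x p i)

/-- `E = x_u²`. -/
def Efun (x : ℝ × ℝ → Fin n → ℝ) (p : ℝ × ℝ) : ℝ := mink (xu x p) (xu x p)

/-- `F = x_u · x_v`. -/
def Ffun (x : ℝ × ℝ → Fin n → ℝ) (p : ℝ × ℝ) : ℝ := mink (xu x p) (xv x p)

/-- `G = x_v²`. -/
def Gfun (x : ℝ × ℝ → Fin n → ℝ) (p : ℝ × ℝ) : ℝ := mink (xv x p) (xv x p)

/-- Isothermal coordinates for a time-like surface, with the convention `E < 0`:
`E = -G < 0`, `F = 0`. -/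
def Isoth (x : ℝ × ℝ → Fin n → ℝ) (p : ℝ × ℝ) : Prop :=
  Efun x p < 0 ∧ Gfun x p = - Efun x p ∧ Ffun x p = 0

/-- Orthogonal projection onto the normal space (valid in isothermal coordinates,
where `F = 0` and the tangent directions `x_u`, `x_v` are non-null). -/
def perp (x : ℝ × ℝ → Fin n → ℝ) (p : ℝ × ℝ) (w : Fin n → ℝ) : Fin n → ℝ :=
  w - (mink w (xu x p) / Efun x p) • xu x p - (mink w (xv x p) / Gfun x p) • xv x p

/-- `σ(x_u, x_u) = (x_uu)^⊥`. -/
def sUU (x : ℝ × ℝ → Fin n → ℝ) (p : ℝ × ℝ) : Fin n → ℝ := perp x p (pu (xu x) p)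

/-- `σ(x_u, x_v) = (x_uv)^⊥`. -/
def sUV (x : ℝ × ℝ → Fin n → ℝ) (p : ℝ × ℝ) : Fin n → ℝ := perp x p (pv (xu x) p)

/-- `σ(x_v, x_v) = (x_vv)^⊥`. -/
def sVV (x : ℝ × ℝ → Fin n → ℝ) (p : ℝ × ℝ) : Fin n → ℝ := perp x p (pv (xv x) p)

/-- The mean curvature vector `H = (1/2)(-σ(X₁,X₁) + σ(X₂,X₂))` expressed in
isothermal coordinates: `H = (1/(2E))(σ(x_u,x_u) - σ(x_v,x_v))`. -/
def Hmean (x : ℝ × ℝ → Fin n → ℝ) (p : ℝ × ℝ) : Fin n → ℝ :=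
  (1 / (2 * Efun x p)) • (sUU x p - sVV x p)

/-- The Gauss curvature of a minimal time-like surface in isothermal coordinates:
`K = -σ²(X₁,X₁) + σ²(X₁,X₂) = (-σ²(x_u,x_u) + σ²(x_u,x_v))/E²`. -/
def Kgauss (x : ℝ × ℝ → Fin n → ℝ) (p : ℝ × ℝ) : ℝ :=
  (-(mink (sUU x p) (sUU x p)) + mink (sUV x p) (sUV x p)) / (Efun x p) ^ 2

/-- `Φ′ = ∂Φ/∂t`. -/
def PhiP (x : ℝ × ℝ → Fin n → ℝ) : (ℝ × ℝ) → Fin n → DNum := fun p => dtV (Phi x) p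

/-- The normal projection `Φ′^⊥ = Φ′ - ((Φ′·Φ̄)/‖Φ‖²) Φ`. -/
def PhiPperp (x : ℝ × ℝ → Fin n → ℝ) (p : ℝ × ℝ) : Fin n → DNum :=
  fun i => PhiP x p i -
    (minkD (PhiP x p) (conjV (Phi x p)) * ofReal (normSqV (Phi x p))⁻¹) * Phi x p i

/-- `σ(x_u,x_u) + j σ(x_u,x_v)` (which equals `Φ′^⊥` on a minimal surface). -/
def SigmaJ (x : ℝ × ℝ → Fin n → ℝ) (p : ℝ × ℝ) : Fin n → DNum :=
  fun i => mk' (sUU x p i) (sUV x p i)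

/-- `σ(a x_u + b x_v, c x_u + d x_v)` by bilinearity. -/
def sigComb (x : ℝ × ℝ → Fin n → ℝ) (p : ℝ × ℝ) (a b c d : ℝ) : Fin n → ℝ :=
  (a * c) • sUU x p + (a * d + b * c) • sUV x p + (b * d) • sVV x p

/-- `(a x_u + b x_v, c x_u + d x_v)` is an orthonormal tangent frame with `X₁² = -1`. -/
def OrthFrame (x : ℝ × ℝ → Fin n → ℝ) (p : ℝ × ℝ) (a b c d : ℝ) : Prop :=
  mink (a • xu x p + b • xv x p) (a • xu x p + b • xv x p) = -1 ∧
  mink (c • xu x p + d • xv x p) (c • xu x p + d • xv x p) = 1 ∧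
  mink (a • xu x p + b • xv x p) (c • xu x p + d • xv x p) = 0

end DNum

open DNum

namespace DNum
variable {n : ℕ}

lemma mk'_eq (u v : ℝ) : mk' u v = (u - v, u + v) := by
  simp [mk', ofReal, j, Prod.ext_iff]; constructor <;> ring

lemma re_mk' (u v : ℝ) : re (mk' u v) = u := by simp [mk'_eq, re]

lemma mink_comm (a b : Fin n → ℝ) : mink a b = mink b a := by
  simp [mink, mul_comm]

lemma mink_add_left (a b c : Fin n → ℝ) : mink (a + b) c = mink a c + mink b c := by
  simp [mink, add_mul, mul_add, Finset.sum_add_distrib]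

lemma mink_sub_left (a b c : Fin n → ℝ) : mink (a - b) c = mink a c - mink b c := by
  simp [mink, sub_mul, mul_sub, Finset.sum_sub_distrib]

lemma mink_smul_left (r : ℝ) (a b : Fin n → ℝ) : mink (r • a) b = r * mink a b := by
  simp [mink, Finset.mul_sum]; congr 1; ext i; ring

lemma mink_sub_right (a b c : Fin n → ℝ) : mink a (b - c) = mink a b - mink a c := by
  rw [mink_comm, mink_sub_left, mink_comm b a, mink_comm c a]

lemma mink_smul_right (r : ℝ) (a b : Fin n → ℝ) : mink a (r • b) = r * mink a b := by
  rw [mink_comm, mink_smul_left, mink_comm]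

lemma minkD_mk'_conj (A B C D : Fin n → ℝ) :
    minkD (fun i => mk' (A i) (B i)) (conjV (fun i => mk' (C i) (D i)))
      = mk' (mink A C - mink B D) (mink B C - mink A D) := by
  simp only [minkD, conjV, mk'_eq, conj, ofReal, mink, Prod.ext_iff,
    Prod.fst_sum, Prod.snd_sum, Prod.fst_mul, Prod.snd_mul, Prod.fst_add, Prod.snd_add,
    Prod.mk.injEq]
  constructor <;>
  · simp only [← Finset.sum_neg_distrib, ← Finset.sum_sub_distrib, ← Finset.sum_add_distrib,
      neg_one_mul, neg_sub]
    exact Finset.sum_congr rfl fun i _ => by ring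

lemma normSqV_mk' (A B : Fin n → ℝ) :
    normSqV (fun i => mk' (A i) (B i)) = mink A A - mink B B := by
  rw [normSqV, minkD_mk'_conj, re_mk']

lemma absSq_mk' (a b : ℝ) : absSq (mk' a b) = a ^ 2 - b ^ 2 := by
  simp [absSq, mk'_eq, conj, re]; ring

lemma j_mul_mk' (a b : ℝ) : j * mk' a b = mk' b a := by
  refine Prod.ext ?_ ?_ <;> simp [mk'_eq, j] <;> ring

lemma mk'_add (a b c d : ℝ) : mk' a b + mk' c d = mk' (a + c) (b + d) := by
  refine Prod.ext ?_ ?_ <;> simp [mk'_eq] <;> ring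

lemma mk'_sub (a b c d : ℝ) : mk' a b - mk' c d = mk' (a - c) (b - d) := by
  refine Prod.ext ?_ ?_ <;> simp [mk'_eq] <;> ring

lemma mk'_mul (a b c d : ℝ) : mk' a b * mk' c d = mk' (a * c + b * d) (a * d + b * c) := by
  refine Prod.ext ?_ ?_ <;> simp [mk'_eq] <;> ring

lemma smul_mk' (r a b : ℝ) : r • mk' a b = mk' (r * a) (r * b) := by
  refine Prod.ext ?_ ?_ <;> simp [mk'_eq, Prod.smul_fst, Prod.smul_snd, smul_eq_mul] <;> ring

lemma ofReal_eq_mk' (r : ℝ) : ofReal r = mk' r 0 := by simp [mk'_eq, ofReal]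

end DNum

namespace DNum
lemma minkD_comm {n : ℕ} (A B : Fin n → DNum) : minkD A B = minkD B A := by
  simp [minkD, mul_comm]
end DNum
namespace DNum
variable {n : ℕ}

lemma pd_proj {f : ℝ × ℝ → Fin n → ℝ} {p : ℝ × ℝ} (hf : DifferentiableAt ℝ f p)
    (w : ℝ × ℝ) (i : Fin n) : pd w (fun z => f z i) p = pd w f p i := by
  have h : HasFDerivAt (fun z => f z i)
      ((ContinuousLinearMap.proj i).comp (fderiv ℝ f p)) p := by
    simpa [Function.comp_def] using
      (ContinuousLinearMap.proj i).hasFDerivAt.comp p hf.hasFDerivAt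
  simp [pd, h.fderiv]

lemma pd_mk'_comp {f g : ℝ × ℝ → ℝ} {p : ℝ × ℝ} (hf : DifferentiableAt ℝ f p)
    (hg : DifferentiableAt ℝ g p) (w : ℝ × ℝ) :
    pd w (fun z => mk' (f z) (g z)) p = mk' (pd w f p) (pd w g p) := by
  have hfg : (fun z => mk' (f z) (g z)) = fun z => (f z - g z, f z + g z) :=
    funext fun z => mk'_eq _ _
  rw [pd, hfg,
    ((hf.hasFDerivAt.fun_sub hg.hasFDerivAt).prodMk (hf.hasFDerivAt.fun_add hg.hasFDerivAt)).fderiv]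
  simp [mk'_eq, pd]

lemma pd_mink {f g : ℝ × ℝ → Fin n → ℝ} {p : ℝ × ℝ} (hf : DifferentiableAt ℝ f p)
    (hg : DifferentiableAt ℝ g p) (w : ℝ × ℝ) :
    pd w (fun z => mink (f z) (g z)) p = mink (pd w f p) (g p) + mink (f p) (pd w g p) := by
  have hfi : ∀ i : Fin n, DifferentiableAt ℝ (fun z => f z i) p := fun i => by
    simpa [Function.comp_def] using
      (ContinuousLinearMap.proj i).differentiable.differentiableAt.comp p hf
  have hgi : ∀ i : Fin n, DifferentiableAt ℝ (fun z => g z i) p := fun i => by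
    simpa [Function.comp_def] using
      (ContinuousLinearMap.proj i).differentiable.differentiableAt.comp p hg
  have h : HasFDerivAt (fun z => mink (f z) (g z))
      (∑ i : Fin n, minkEta n i •
        (f p i • fderiv ℝ (fun z => g z i) p + g p i • fderiv ℝ (fun z => f z i) p)) p := by
    have : (fun z => mink (f z) (g z)) =
        fun z => ∑ i : Fin n, minkEta n i * ((fun z => f z i) z * (fun z => g z i) z) := rfl
    rw [this]
    exact HasFDerivAt.fun_sum fun i _ =>
      (((hfi i).hasFDerivAt.mul (hgi i).hasFDerivAt)).const_mul (minkEta n i)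
  rw [pd, h.fderiv]
  simp only [ContinuousLinearMap.sum_apply, ContinuousLinearMap.smul_apply,
    ContinuousLinearMap.add_apply, smul_eq_mul]
  rw [mink, mink, ← Finset.sum_add_distrib]
  refine Finset.sum_congr rfl fun i _ => ?_
  rw [← pd, ← pd, pd_proj hf, pd_proj hg]
  ring

end DNum
namespace DNum
variable {n : ℕ} {x : ℝ × ℝ → Fin n → ℝ} {U : Set (ℝ × ℝ)} {p : ℝ × ℝ}

lemma smooth_facts (hU : IsOpen U) (hsm : ContDiffOn ℝ (⊤ : ℕ∞) x U) (hp : p ∈ U) :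
    DifferentiableAt ℝ (xu x) p ∧ DifferentiableAt ℝ (xv x) p ∧
      pd ((0:ℝ),(1:ℝ)) (xu x) p = pd ((1:ℝ),(0:ℝ)) (xv x) p := by
  have hC : ContDiffAt ℝ (⊤ : ℕ∞) x p := hsm.contDiffAt (hU.mem_nhds hp)
  have hC' : ContDiffAt ℝ (⊤ : ℕ∞) (fderiv ℝ x) p := hC.fderiv_right (by simp)
  have hxu : DifferentiableAt ℝ (xu x) p :=
    (hC'.clm_apply contDiffAt_const).differentiableAt (by simp)
  have hxv : DifferentiableAt ℝ (xv x) p :=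
    (hC'.clm_apply contDiffAt_const).differentiableAt (by simp)
  refine ⟨hxu, hxv, ?_⟩
  have hkey : ∀ w w' : ℝ × ℝ, pd w' (fun z => fderiv ℝ x z w) p
      = fderiv ℝ (fderiv ℝ x) p w' w := by
    intro w w'
    rw [pd, fderiv_clm_apply (hC'.differentiableAt (by simp)) (differentiableAt_const w)]
    simp
  have hs : IsSymmSndFDerivAt ℝ x p := hC.isSymmSndFDerivAt (by rw [minSmoothness_of_isRCLikeNormedField]; exact WithTop.coe_le_coe.mpr le_top)
  show pd _ (fun z => fderiv ℝ x z ((1:ℝ),(0:ℝ))) p = pd _ (fun z => fderiv ℝ x z ((0:ℝ),(1:ℝ))) p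
  rw [hkey, hkey, hs.eq]

end DNum
namespace DNum
variable {n : ℕ} {p : ℝ × ℝ}

lemma differentiableAt_comp_proj {f : ℝ × ℝ → Fin n → ℝ} (hf : DifferentiableAt ℝ f p)
    (i : Fin n) : DifferentiableAt ℝ (fun z => f z i) p := by
  simpa [Function.comp_def] using
    (ContinuousLinearMap.proj i).differentiable.differentiableAt.comp p hf

lemma differentiableAt_mink {f g : ℝ × ℝ → Fin n → ℝ} (hf : DifferentiableAt ℝ f p)
    (hg : DifferentiableAt ℝ g p) :
    DifferentiableAt ℝ (fun z => mink (f z) (g z)) p := by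
  have : (fun z => mink (f z) (g z)) =
      fun z => ∑ i : Fin n, minkEta n i * (f z i * g z i) := rfl
  rw [this]
  exact DifferentiableAt.fun_sum fun i _ =>
    ((differentiableAt_comp_proj hf i).mul (differentiableAt_comp_proj hg i)).const_mul _

lemma pd_eventually_zero {h : ℝ × ℝ → ℝ} (hev : h =ᶠ[nhds p] fun _ => (0:ℝ)) (w : ℝ × ℝ) :
    pd w h p = 0 := by
  rw [pd, hev.fderiv_eq]
  simp

lemma mink_perp_expand (u v w1 : Fin n → ℝ) (a b : ℝ) :
    mink (w1 - a • u - b • v) (w1 - a • u - b • v) =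
      mink w1 w1 - 2*a*(mink w1 u) - 2*b*(mink w1 v) + a^2 * mink u u
        + 2*a*b*(mink u v) + b^2 * mink v v := by
  simp only [mink_sub_left, mink_sub_right, mink_smul_left, mink_smul_right,
    mink_comm u w1, mink_comm v w1, mink_comm v u]
  ring

end DNum

/-- For a minimal time-like surface in isothermal coordinates,
`K = -4‖Φ′^⊥‖²/‖Φ‖⁴ = -4(‖Φ‖²‖Φ′‖² - |Φ̄·Φ′|²)/‖Φ‖⁶`. -/
theorem stmt14 (n : ℕ) (x : ℝ × ℝ → Fin n → ℝ) (U : Set (ℝ × ℝ)) (hU : IsOpen U)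
    (hsm : ContDiffOn ℝ (⊤ : ℕ∞) x U) (hiso : ∀ p ∈ U, Isoth x p)
    (hmin : ∀ p ∈ U, Hmean x p = 0) (p : ℝ × ℝ) (hp : p ∈ U) :
    Kgauss x p = -4 * normSqV (PhiPperp x p) / (normSqV (Phi x p)) ^ 2 ∧
    Kgauss x p = -4 * (normSqV (Phi x p) * normSqV (PhiP x p) -
      absSq (minkD (conjV (Phi x p)) (PhiP x p))) / (normSqV (Phi x p)) ^ 3 := by
  obtain ⟨hxu, hxv, hsym⟩ := smooth_facts hU hsm hp
  obtain ⟨hEneg, hGE, hF0⟩ := hiso p hp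
  set u : Fin n → ℝ := xu x p with hu
  set v : Fin n → ℝ := xv x p with hv
  set A : Fin n → ℝ := pd ((1:ℝ),(0:ℝ)) (xu x) p with hA
  set B : Fin n → ℝ := pd ((0:ℝ),(1:ℝ)) (xu x) p with hB
  set C : Fin n → ℝ := pd ((0:ℝ),(1:ℝ)) (xv x) p with hC
  set E : ℝ := Efun x p with hE
  have hEne : E ≠ 0 := ne_of_lt hEneg
  have huu : mink u u = E := by rw [hu, hE]; rfl
  have hvv : mink v v = -E := by rw [hv]; exact hGE
  have huv : mink u v = 0 := by rw [hu, hv]; exact hF0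
  -- differentiated isothermal relations
  have hEG : ∀ w, mink (pd w (xu x) p) u + mink (pd w (xv x) p) v = 0 := by
    intro w
    have hev : (fun z => Efun x z + Gfun x z) =ᶠ[nhds p] fun _ => (0:ℝ) := by
      filter_upwards [hU.mem_nhds hp] with q hq
      rw [(hiso q hq).2.1]; ring
    have h0 := pd_eventually_zero hev w
    have hdE : DifferentiableAt ℝ (fun z => Efun x z) p := differentiableAt_mink hxu hxu
    have hdG : DifferentiableAt ℝ (fun z => Gfun x z) p := differentiableAt_mink hxv hxv
    have hsplit : pd w (fun z => Efun x z + Gfun x z) p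
        = pd w (fun z => Efun x z) p + pd w (fun z => Gfun x z) p := by
      simp only [pd]
      rw [fderiv_fun_add hdE hdG]
      rfl
    have h1 : pd w (fun z => Efun x z) p
        = mink (pd w (xu x) p) (xu x p) + mink (xu x p) (pd w (xu x) p) := pd_mink hxu hxu w
    have h2 : pd w (fun z => Gfun x z) p
        = mink (pd w (xv x) p) (xv x p) + mink (xv x p) (pd w (xv x) p) := pd_mink hxv hxv w
    rw [hsplit, h1, h2, ← hu, ← hv] at h0
    linarith [h0, mink_comm u (pd w (xu x) p), mink_comm v (pd w (xv x) p)]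
  have hFF : ∀ w, mink (pd w (xu x) p) v + mink u (pd w (xv x) p) = 0 := by
    intro w
    have hev : (fun z => Ffun x z) =ᶠ[nhds p] fun _ => (0:ℝ) := by
      filter_upwards [hU.mem_nhds hp] with q hq
      exact (hiso q hq).2.2
    have h0 := pd_eventually_zero hev w
    have h1 : pd w (fun z => Ffun x z) p
        = mink (pd w (xu x) p) (xv x p) + mink (xu x p) (pd w (xv x) p) := pd_mink hxu hxv w
    rw [h1, ← hu, ← hv] at h0
    linarith [h0]
  have r1 : mink A u + mink B v = 0 := by
    have h := hEG ((1:ℝ),(0:ℝ)); rw [← hA, ← hsym] at h; exact h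
  have r2 : mink B u + mink C v = 0 := by
    have h := hEG ((0:ℝ),(1:ℝ)); rw [← hB, ← hC] at h; exact h
  have r3 : mink A v + mink u B = 0 := by
    have h := hFF ((1:ℝ),(0:ℝ)); rw [← hA, ← hsym] at h; exact h
  have r4 : mink B v + mink u C = 0 := by
    have h := hFF ((0:ℝ),(1:ℝ)); rw [← hB, ← hC] at h; exact h
  set m : Fin n → ℝ := (2⁻¹:ℝ) • (A + C) with hm
  have hmu : mink m u = - mink B v := by
    rw [hm, mink_smul_left, mink_add_left]
    linarith [r1, r4, mink_comm u C, mink_comm C u]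
  have hmv : mink m v = - mink B u := by
    rw [hm, mink_smul_left, mink_add_left]
    linarith [r2, r3, mink_comm u B, mink_comm B u]
  have hBv : mink B v = - mink m u := by linarith [hmu]
  -- representations
  have hPhi : Phi x p = fun i => mk' (u i) (v i) := by
    funext i
    show mk' (xu x p i) (xv x p i) = _
    rw [hu, hv]
  have hPhiP : PhiP x p = fun i => mk' (m i) (B i) := by
    funext i
    have hxui : DifferentiableAt ℝ (fun z => xu x z i) p := differentiableAt_comp_proj hxu i
    have hxvi : DifferentiableAt ℝ (fun z => xv x z i) p := differentiableAt_comp_proj hxv i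
    have h1 := pd_mk'_comp hxui hxvi ((1:ℝ),(0:ℝ))
    have h2 := pd_mk'_comp hxui hxvi ((0:ℝ),(1:ℝ))
    rw [pd_proj hxu, pd_proj hxv, ← hA, ← hsym] at h1
    rw [pd_proj hxu, pd_proj hxv, ← hB, ← hC] at h2
    show (2⁻¹:ℝ) • (pu (fun z => Phi x z i) p + j * pv (fun z => Phi x z i) p) = _
    have e1 : pu (fun z => Phi x z i) p = mk' (A i) (B i) := h1
    have e2 : pv (fun z => Phi x z i) p = mk' (B i) (C i) := h2
    rw [e1, e2, j_mul_mk', mk'_add, smul_mk', hm]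
    simp only [Pi.smul_apply, Pi.add_apply, smul_eq_mul]
    congr 1 <;> ring
  -- minimality
  have hUUVV : sUU x p = sVV x p := by
    have h := hmin p hp
    rw [Hmean] at h
    rw [← hE] at h
    rcases smul_eq_zero.mp h with h' | h'
    · exfalso
      rw [div_eq_zero_iff] at h'
      rcases h' with h' | h'
      · exact one_ne_zero h'
      · exact (mul_ne_zero two_ne_zero hEne) h'
    · exact sub_eq_zero.mp h'
  have hPM : perp x p m = sUU x p := by
    have hlin : perp x p m = (2⁻¹:ℝ) • (perp x p A + perp x p C) := by
      funext i
      simp only [perp, hm, Pi.sub_apply, Pi.smul_apply, Pi.add_apply, smul_eq_mul,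
        mink_smul_left, mink_add_left]
      ring
    have h1 : perp x p A = sUU x p := by rw [hA]; rfl
    have h2 : perp x p C = sVV x p := by rw [hC]; rfl
    rw [hlin, h1, h2, ← hUUVV]
    funext i
    simp only [Pi.smul_apply, Pi.add_apply, smul_eq_mul]
    ring
  have hPS : perp x p B = sUV x p := by rw [hB]; rfl
  -- the projection coefficient
  have hW : minkD (PhiP x p) (conjV (Phi x p)) = mk' (2 * mink m u) (2 * mink B u) := by
    rw [hPhiP, hPhi, minkD_mk'_conj]
    congr 1 <;> linarith [hmu, hmv, hBv]
  have hN : normSqV (Phi x p) = 2 * E := by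
    rw [hPhi, normSqV_mk', huu, hvv]; ring
  have hPerp : PhiPperp x p = fun i => mk' (perp x p m i) (perp x p B i) := by
    funext i
    show PhiP x p i -
        (minkD (PhiP x p) (conjV (Phi x p)) * ofReal (normSqV (Phi x p))⁻¹) * Phi x p i = _
    rw [congrFun hPhiP i, congrFun hPhi i, hW, hN, ofReal_eq_mk', mk'_mul, mk'_mul, mk'_sub]
    show _ = mk' (perp x p m i) (perp x p B i)
    simp only [perp, Pi.sub_apply, Pi.smul_apply, smul_eq_mul]
    rw [← hu, ← hv, ← hE, hGE]
    congr 1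
    · rw [hmv]; field_simp; ring
    · rw [hBv]; field_simp; ring
  have hPuu : mink (perp x p m) (perp x p m)
      = mink m m - (mink m u)^2/E + (mink B u)^2/E := by
    show mink (m - (mink m (xu x p) / Efun x p) • xu x p
        - (mink m (xv x p) / Gfun x p) • xv x p)
        (m - (mink m (xu x p) / Efun x p) • xu x p
        - (mink m (xv x p) / Gfun x p) • xv x p) = _
    rw [← hu, ← hv, ← hE, hGE, mink_perp_expand, huu, hvv, huv, hmv]
    field_simp
    ring
  have hPvv : mink (perp x p B) (perp x p B)
      = mink B B - (mink B u)^2/E + (mink m u)^2/E := by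
    show mink (B - (mink B (xu x p) / Efun x p) • xu x p
        - (mink B (xv x p) / Gfun x p) • xv x p)
        (B - (mink B (xu x p) / Efun x p) • xu x p
        - (mink B (xv x p) / Gfun x p) • xv x p) = _
    rw [← hu, ← hv, ← hE, hGE, mink_perp_expand, huu, hvv, huv, hBv]
    field_simp
    ring
  constructor
  · show (-(mink (sUU x p) (sUU x p)) + mink (sUV x p) (sUV x p)) / (Efun x p) ^ 2 = _
    rw [← hE, ← hPM, ← hPS, hPerp, normSqV_mk', hN]
    field_simp
    ring
  · show (-(mink (sUU x p) (sUU x p)) + mink (sUV x p) (sUV x p)) / (Efun x p) ^ 2 = _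
    rw [← hE, ← hPM, ← hPS, hPuu, hPvv, hN, minkD_comm, hW, absSq_mk', hPhiP, normSqV_mk']
    field_simp
    ring
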